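/- A matrix A = [[a,b],[c,d]] ∈ Mat₂(Cl(V)) satisfies A A̅ ∈ ℝ^× (where A̅ is the Clifford conjugation via the identification with Cl(V ⊕ ℝ^{1,1})) if and only if a b~ = b a~, c d~ = d c~, and the pseudo-determinant Δ(A) = a d~ - b c~ is a nonzero real number; in that case A A̅ = Δ(A)·I. -/

import Mathlib

open CliffordAlgebra

theorem Matrix.fin_two_eq_algebraMap_iff {R A : Type*} [CommSemiring R] [Semiring A]
    [Algebra R A] (w x y z : A) (r : R) :
    !![w, x; y, z] = algebraMap R (Matrix (Fin 2) (Fin 2) A) r ↔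
      w = algebraMap R A r ∧ x = 0 ∧ y = 0 ∧ z = algebraMap R A r := by
  simp [← Matrix.ext_iff, Fin.forall_fin_two, Matrix.algebraMap_matrix_apply, and_assoc]

namespace CliffordAlgebra

variable {R M : Type*} [CommRing R] [AddCommGroup M] [Module R M] {Q : QuadraticForm R M}

theorem fin_two_mul_conj (a b c d : CliffordAlgebra Q) :
    !![a, b; c, d] * !![reverse d, -reverse b; -reverse c, reverse a] =
      !![a * reverse d - b * reverse c, b * reverse a - a * reverse b;
        c * reverse d - d * reverse c, reverse (a * reverse d - b * reverse c)] := by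
  simp only [Matrix.mul_fin_two, map_sub, reverse.map_mul, reverse_reverse, mul_neg,
    ← sub_eq_add_neg, neg_add_eq_sub]

theorem fin_two_mul_conj_eq_algebraMap_iff (a b c d : CliffordAlgebra Q) (r : R) :
    !![a, b; c, d] * !![reverse d, -reverse b; -reverse c, reverse a] =
        algebraMap R (Matrix (Fin 2) (Fin 2) (CliffordAlgebra Q)) r ↔
      a * reverse b = b * reverse a ∧ c * reverse d = d * reverse c ∧
        a * reverse d - b * reverse c = algebraMap R _ r := by
  rw [fin_two_mul_conj, Matrix.fin_two_eq_algebraMap_iff, sub_eq_zero, sub_eq_zero, eq_comm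
    (a := b * reverse a)]
  constructor
  · rintro ⟨hΔ, hb, hc, -⟩
    exact ⟨hb, hc, hΔ⟩
  · rintro ⟨hb, hc, hΔ⟩
    exact ⟨hΔ, hb, hc, by rw [hΔ, reverse.commutes]⟩

end CliffordAlgebra

theorem matrix_conj_real_iff (V : Type*) [AddCommGroup V] [Module ℝ V]
    (Q : QuadraticForm ℝ V)
    (a b c d : CliffordAlgebra (-Q)) :
    ((∃ r : ℝ, r ≠ 0 ∧
        (!![a, b; c, d] : Matrix (Fin 2) (Fin 2) (CliffordAlgebra (-Q))) *
          !![reverse d, -reverse b; -reverse c, reverse a] =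
        algebraMap ℝ (Matrix (Fin 2) (Fin 2) (CliffordAlgebra (-Q))) r) ↔
      (a * reverse b = b * reverse a ∧ c * reverse d = d * reverse c ∧
        ∃ r : ℝ, r ≠ 0 ∧ a * reverse d - b * reverse c = algebraMap ℝ _ r)) ∧
    ((∃ r : ℝ, r ≠ 0 ∧
        (!![a, b; c, d] : Matrix (Fin 2) (Fin 2) (CliffordAlgebra (-Q))) *
          !![reverse d, -reverse b; -reverse c, reverse a] =
        algebraMap ℝ (Matrix (Fin 2) (Fin 2) (CliffordAlgebra (-Q))) r) →
      (!![a, b; c, d] : Matrix (Fin 2) (Fin 2) (CliffordAlgebra (-Q))) *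
          !![reverse d, -reverse b; -reverse c, reverse a] =
        Matrix.scalar (Fin 2) (a * reverse d - b * reverse c)) := by
  simp_rw [fin_two_mul_conj_eq_algebraMap_iff]
  refine ⟨⟨fun ⟨r, hr, hb, hc, hΔ⟩ => ⟨hb, hc, r, hr, hΔ⟩,
    fun ⟨hb, hc, r, hr, hΔ⟩ => ⟨r, hr, hb, hc, hΔ⟩⟩, ?_⟩
  rintro ⟨r, -, hb, hc, hΔ⟩
  rw [(fin_two_mul_conj_eq_algebraMap_iff a b c d r).2 ⟨hb, hc, hΔ⟩, hΔ]
  -- the matrix algebra structure is `Matrix.scalar _ ∘ algebraMap ℝ _` definitionally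
  rfl
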